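/- arXiv:2504.16327 — 2 statements merged into one kernel-verified Lean document; each statement's English description precedes it below -/
import Mathlib

section
/- Let M be a matroid on [n], α ∈ [0,1], and D_A an α-uncontentious distribution for M. Sample A ∼ D_A and an independent uniformly random permutation σ of [n]. Then there exists i ∈ [n] with Pr[i ∈ A] > 0 such that Pr[i ∉ span_M(A ∩ prefix(σ, i)) | i ∈ A] ≥ α, where prefix(σ, i) is the set of elements preceding i in σ. -/
/-- A matroid on ground set `Fin n`, given as the finite family of independent sets. -/
def IsMatroid {n : ℕ} (M : Finset (Finset (Fin n))) : Prop :=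
  ∅ ∈ M ∧ (∀ X ∈ M, ∀ Y ⊆ X, Y ∈ M) ∧
    ∀ X ∈ M, ∀ Y ∈ M, Y.card < X.card → ∃ i ∈ X \ Y, insert i Y ∈ M

/-- The rank of `X`: the maximum cardinality of an independent subset of `X`. -/
def mrank {n : ℕ} (M : Finset (Finset (Fin n))) (X : Finset (Fin n)) : ℕ :=
  (X.powerset.filter (· ∈ M)).sup Finset.card

/-- The span of `X`: all elements whose insertion does not increase the rank. -/
def spanM {n : ℕ} (M : Finset (Finset (Fin n))) (X : Finset (Fin n)) : Finset (Fin n) :=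
  Finset.univ.filter fun i => mrank M (insert i X) = mrank M X

/-- A (finitely supported) probability distribution on subsets of `Fin n`. -/
def IsDist {n : ℕ} (D : Finset (Fin n) → ℝ) : Prop :=
  (∀ A, 0 ≤ D A) ∧ ∑ A : Finset (Fin n), D A = 1

/-- `Pr_{A ∼ D}[i ∈ A]`. -/
noncomputable def prElem {n : ℕ} (D : Finset (Fin n) → ℝ) (i : Fin n) : ℝ :=
  ∑ A : Finset (Fin n), if i ∈ A then D A else 0

/-- A contention resolution scheme: a distribution over maps `φ` with `φ A ⊆ A` and `φ A ∈ M`. -/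
def IsCRS {n : ℕ} (M : Finset (Finset (Fin n)))
    (C : (Finset (Fin n) → Finset (Fin n)) → ℝ) : Prop :=
  (∀ φ, 0 ≤ C φ) ∧ (∑ φ : Finset (Fin n) → Finset (Fin n), C φ) = 1 ∧
    ∀ φ, C φ ≠ 0 → ∀ A, φ A ⊆ A ∧ φ A ∈ M

/-- `Pr_{A ∼ D, φ ∼ C}[i ∈ φ(A) ∧ i ∈ A]`. -/
noncomputable def selProb {n : ℕ} (D : Finset (Fin n) → ℝ)
    (C : (Finset (Fin n) → Finset (Fin n)) → ℝ) (i : Fin n) : ℝ :=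
  ∑ A : Finset (Fin n), ∑ φ : Finset (Fin n) → Finset (Fin n),
    if i ∈ φ A ∧ i ∈ A then D A * C φ else 0

/-- `D` is `α`-uncontentious for `M`: there is an `α`-balanced CRS, i.e. one with
`Pr[i ∈ φ(A) | i ∈ A] ≥ α` for every `i` with `Pr[i ∈ A] > 0`. -/
def Uncontentious {n : ℕ} (α : ℝ) (M : Finset (Finset (Fin n)))
    (D : Finset (Fin n) → ℝ) : Prop :=
  ∃ C, IsCRS M C ∧ ∀ i : Fin n, 0 < prElem D i → α ≤ selProb D C i / prElem D i

/-- The set of elements arriving strictly before `e` in the arrival order `σ`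
(where `σ j` is the `j`-th arriving element). -/
def prefixSet {m : ℕ} (σ : Equiv.Perm (Fin m)) (e : Fin m) : Finset (Fin m) :=
  Finset.univ.filter fun x => σ.symm x < σ.symm e

/-!
Process the elements of `A` in the order `σ`: an element is unspanned by its predecessors
exactly when it raises the rank, so for every `σ` the number of such elements of `A` is
`r(A)`, and summing over `i` gives `n! · 𝔼[r(A)]`. On the other hand any CRS selects an
independent subset of `A`, so `∑ᵢ Pr[i ∈ φ(A)] ≤ 𝔼[r(A)]`, while `α`-balancedness gives
`α · Pr[i ∈ A] ≤ Pr[i ∈ φ(A)]`. Comparing the two sums, some single `i` must satisfy the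
claimed inequality.
-/

open Finset

section Rank

variable {n : ℕ} (M : Finset (Finset (Fin n)))

lemma card_le_mrank {B X : Finset (Fin n)} (hB : B ∈ M) (hBX : B ⊆ X) :
    B.card ≤ mrank M X :=
  le_sup (f := card) (mem_filter.mpr ⟨mem_powerset.mpr hBX, hB⟩)

lemma mrank_mono {X Y : Finset (Fin n)} (h : X ⊆ Y) : mrank M X ≤ mrank M Y :=
  Finset.sup_le fun B hB => by
    rw [mem_filter, mem_powerset] at hB
    exact card_le_mrank M hB.2 (hB.1.trans h)

@[simp]
lemma mrank_empty : mrank M ∅ = 0 :=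
  Nat.le_zero.mp <| Finset.sup_le fun B hB => by
    rw [mem_filter, mem_powerset, subset_empty] at hB
    simp [hB.1]

variable {M} (hdown : ∀ X ∈ M, ∀ Y ⊆ X, Y ∈ M)
include hdown

lemma mrank_insert_le (i : Fin n) (X : Finset (Fin n)) :
    mrank M (insert i X) ≤ mrank M X + 1 :=
  Finset.sup_le fun B hB => by
    rw [mem_filter, mem_powerset] at hB
    have := card_le_mrank M (hdown B hB.2 _ (erase_subset i B)) (subset_insert_iff.mp hB.1)
    have := pred_card_le_card_erase (s := B) (a := i)
    omega

lemma notMem_spanM_iff {i : Fin n} {X : Finset (Fin n)} :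
    i ∉ spanM M X ↔ mrank M (insert i X) = mrank M X + 1 := by
  have := mrank_insert_le hdown i X
  have := mrank_mono M (subset_insert i X)
  simp only [spanM, mem_filter, mem_univ, true_and]
  omega

end Rank

section Prefix

variable {n : ℕ} {σ : Equiv.Perm (Fin n)} {a : Fin n} {s : Finset (Fin n)}

lemma insert_inter_prefixSet_self (ha : a ∉ s) (hmax : ∀ x ∈ s, σ.symm x ≤ σ.symm a) :
    insert a s ∩ prefixSet σ a = s := by
  rw [insert_inter_of_notMem (by simp [prefixSet]), inter_eq_left]
  intro x hx
  have hxa : x ≠ a := ne_of_mem_of_not_mem hx ha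
  simpa [prefixSet] using (hmax x hx).lt_of_ne (σ.symm.injective.ne hxa)

lemma insert_inter_prefixSet_of_mem (hmax : ∀ x ∈ s, σ.symm x ≤ σ.symm a) {i : Fin n}
    (hi : i ∈ s) : insert a s ∩ prefixSet σ i = s ∩ prefixSet σ i :=
  insert_inter_of_notMem (by simpa [prefixSet] using hmax i hi)

end Prefix

theorem card_filter_notMem_spanM_prefixSet {n : ℕ} {M : Finset (Finset (Fin n))}
    (hdown : ∀ X ∈ M, ∀ Y ⊆ X, Y ∈ M) (σ : Equiv.Perm (Fin n)) (A : Finset (Fin n)) :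
    (A.filter fun i => i ∉ spanM M (A ∩ prefixSet σ i)).card = mrank M A := by
  induction A using Finset.induction_on_max_value σ.symm with
  | empty => simp
  | insert a s ha hmax ih =>
    rw [filter_insert, insert_inter_prefixSet_self ha hmax,
      filter_congr fun i hi => by rw [insert_inter_prefixSet_of_mem hmax hi]]
    split_ifs with h
    · rw [ih, (mem_filter.mp h).2]
    · rw [card_insert_of_notMem fun h' => ha (mem_filter.mp h').1, ih,
        (notMem_spanM_iff hdown).mp h]

open scoped Nat in
theorem sum_unspanned_by_prefix_eq {n : ℕ} {M : Finset (Finset (Fin n))}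
    (hdown : ∀ X ∈ M, ∀ Y ⊆ X, Y ∈ M) (D : Finset (Fin n) → ℝ) :
    ∑ i : Fin n, ∑ σ : Equiv.Perm (Fin n), ∑ A : Finset (Fin n),
        (if i ∈ A ∧ i ∉ spanM M (A ∩ prefixSet σ i) then D A else 0) =
      n ! * ∑ A : Finset (Fin n), (mrank M A : ℝ) * D A := by
  calc _ = ∑ σ : Equiv.Perm (Fin n), ∑ A : Finset (Fin n), ∑ i : Fin n,
        (if i ∈ A ∧ i ∉ spanM M (A ∩ prefixSet σ i) then D A else 0) := by
        rw [sum_comm]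
        exact sum_congr rfl fun σ _ => sum_comm
    _ = ∑ _σ : Equiv.Perm (Fin n), ∑ A : Finset (Fin n), (mrank M A : ℝ) * D A := by
        refine sum_congr rfl fun σ _ => sum_congr rfl fun A _ => ?_
        rw [← sum_filter, sum_const, nsmul_eq_mul,
          ← card_filter_notMem_spanM_prefixSet hdown σ A]
        congr 3
        ext i
        simp
    _ = _ := by simp [Fintype.card_perm]

lemma sum_ite_mem_map_le_mrank {n : ℕ} {M : Finset (Finset (Fin n))}
    {C : (Finset (Fin n) → Finset (Fin n)) → ℝ} (hC : IsCRS M C) {D : Finset (Fin n) → ℝ}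
    (hD : ∀ A, 0 ≤ D A) (A : Finset (Fin n)) (φ : Finset (Fin n) → Finset (Fin n)) :
    ∑ i : Fin n, (if i ∈ φ A ∧ i ∈ A then D A * C φ else 0) ≤ mrank M A * (D A * C φ) := by
  by_cases hφ : C φ = 0
  · simp [hφ]
  obtain ⟨hsub, hind⟩ := hC.2.2 φ hφ A
  have hfilter : univ.filter (fun i => i ∈ φ A ∧ i ∈ A) = φ A := by
    ext i
    simpa using fun h => hsub h
  rw [← sum_filter, hfilter, sum_const, nsmul_eq_mul]
  gcongr
  · exact mul_nonneg (hD A) (hC.1 φ)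
  · exact card_le_mrank M hind hsub

lemma sum_selProb_le {n : ℕ} {M : Finset (Finset (Fin n))}
    {C : (Finset (Fin n) → Finset (Fin n)) → ℝ} (hC : IsCRS M C) {D : Finset (Fin n) → ℝ}
    (hD : ∀ A, 0 ≤ D A) :
    ∑ i : Fin n, selProb D C i ≤ ∑ A : Finset (Fin n), (mrank M A : ℝ) * D A := by
  unfold selProb
  rw [sum_comm]
  refine sum_le_sum fun A _ => ?_
  calc _ = ∑ φ : Finset (Fin n) → Finset (Fin n), ∑ i : Fin n,
        (if i ∈ φ A ∧ i ∈ A then D A * C φ else 0) := sum_comm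
    _ ≤ ∑ φ : Finset (Fin n) → Finset (Fin n), mrank M A * (D A * C φ) :=
        sum_le_sum fun φ _ => sum_ite_mem_map_le_mrank hC hD A φ
    _ = mrank M A * D A := by rw [← mul_sum, ← mul_sum, hC.2.1, mul_one]

theorem exists_unspanned_by_prefix_general {n : ℕ} (hn : 0 < n)
    (M : Finset (Finset (Fin n))) (hM : IsMatroid M)
    (α : ℝ)
    (D : Finset (Fin n) → ℝ) (hD : IsDist D) (hu : Uncontentious α M D)
    (hpos : ∀ i : Fin n, 0 < prElem D i) :
    ∃ i : Fin n, 0 < prElem D i ∧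
      α ≤
        ((∑ σ : Equiv.Perm (Fin n), ∑ A : Finset (Fin n),
            if i ∈ A ∧ i ∉ spanM M (A ∩ prefixSet σ i) then D A else 0) /
          (Nat.factorial n : ℝ)) / prElem D i := by
  obtain ⟨C, hC, hbalanced⟩ := hu
  have hsum : ∑ i : Fin n, α * prElem D i ≤
      ∑ i : Fin n, (∑ σ : Equiv.Perm (Fin n), ∑ A : Finset (Fin n),
        if i ∈ A ∧ i ∉ spanM M (A ∩ prefixSet σ i) then D A else 0) / (Nat.factorial n : ℝ) :=
    calc _ ≤ ∑ i : Fin n, selProb D C i :=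
          sum_le_sum fun i _ => (le_div_iff₀ (hpos i)).mp (hbalanced i (hpos i))
      _ ≤ ∑ A : Finset (Fin n), (mrank M A : ℝ) * D A := sum_selProb_le hC hD.1
      _ = _ := by
          rw [← sum_div, sum_unspanned_by_prefix_eq hM.2.1,
            mul_div_cancel_left₀ _ (Nat.cast_ne_zero.mpr n.factorial_ne_zero)]
  obtain ⟨i, -, hi⟩ := exists_le_of_sum_le (univ_nonempty_iff.mpr ⟨⟨0, hn⟩⟩) hsum
  exact ⟨i, hpos i, (le_div_iff₀ (hpos i)).mpr hi⟩

/-- There is an element `i` (active with positive probability) such that, sampling `A ∼ D`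
and an independent uniformly random arrival order `σ`,
`Pr[i ∉ span(A ∩ prefix(σ, i)) | i ∈ A] ≥ α`. -/
theorem exists_unspanned_by_prefix {n : ℕ} (hn : 0 < n)
    (M : Finset (Finset (Fin n))) (hM : IsMatroid M)
    (α : ℝ) (hα : α ∈ Set.Icc (0 : ℝ) 1)
    (D : Finset (Fin n) → ℝ) (hD : IsDist D) (hu : Uncontentious α M D)
    (hpos : ∀ i : Fin n, 0 < prElem D i) :
    ∃ i : Fin n, 0 < prElem D i ∧
      α ≤
        ((∑ σ : Equiv.Perm (Fin n), ∑ A : Finset (Fin n),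
            if i ∈ A ∧ i ∉ spanM M (A ∩ prefixSet σ i) then D A else 0) /
          (Nat.factorial n : ℝ)) / prElem D i :=
  exists_unspanned_by_prefix_general hn M hM α D hD hu hpos
end

section
/- Consider the k-uniform matroid on [n] where all n elements are always active, processed in the order 1, 2, ..., n. Sample T as the prefix before element n+1 in a uniformly random permutation of [n+1], and greedily select element i if i ∈ T and fewer than k elements have been selected so far. Then the probability that element n is selected equals k(k+1)/(2n(n+1)). -/
/-- Restrict a subset of `Fin (n+1)` to a subset of `Fin n` (dropping the last element). -/
def downSet {n : ℕ} (T : Finset (Fin (n + 1))) : Finset (Fin n) :=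
  Finset.univ.filter fun x : Fin n => x.castSucc ∈ T

/-- Greedy selection with capacity `k`: process `1, 2, …, n` in order, selecting each
element of `T` as long as fewer than `k` elements have been selected. -/
def selGreedy {n : ℕ} (k : ℕ) (T : Finset (Fin n)) : Finset (Fin n) :=
  (List.finRange n).foldl (fun X i => if i ∈ T ∧ X.card < k then insert i X else X) ∅

/-!
Let `a = n - 1` and `b = n` (0-indexed), and let `p` be the arrival time of `b`, so that `T` is
the set of the `p` elements arriving before `b`. Greedy selection of `a`, the last element of
`[n]`, happens iff `a ∈ T` and fewer than `k` elements of `T ∖ {a}` exist, i.e. iff `a` arrives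
before `b` and `p ≤ k`. The pair of arrival times of `a` and `b` is uniformly distributed over the
`(n + 1) n` ordered pairs of distinct times, and exactly `k (k + 1) / 2` of them satisfy
`u < v ≤ k`.
-/

open Finset

section Greedy

variable {n : ℕ}

@[simp]
theorem mem_downSet {T : Finset (Fin (n + 1))} {x : Fin n} : x ∈ downSet T ↔ x.castSucc ∈ T := by
  simp [downSet]

theorem map_castSuccEmb_downSet (T : Finset (Fin (n + 1))) :
    (downSet T).map Fin.castSuccEmb = T.erase (Fin.last n) := by
  ext x
  cases x using Fin.lastCases <;> simp [Fin.castSucc_ne_last]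

theorem card_downSet (T : Finset (Fin (n + 1))) : #(downSet T) = #(T.erase (Fin.last n)) := by
  rw [← map_castSuccEmb_downSet, card_map]

theorem foldl_map_castSucc (k : ℕ) (T : Finset (Fin (n + 1))) (l : List (Fin n))
    (S : Finset (Fin n)) :
    (l.map Fin.castSucc).foldl (fun X i => if i ∈ T ∧ #X < k then insert i X else X)
        (S.map Fin.castSuccEmb) =
      (l.foldl (fun X i => if i ∈ downSet T ∧ #X < k then insert i X else X) S).map
        Fin.castSuccEmb := by
  induction l generalizing S with
  | nil => rfl
  | cons a l ih =>
    rw [List.map_cons, List.foldl_cons, List.foldl_cons, ← ih]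
    congr 1
    simp only [card_map, mem_downSet]
    split_ifs <;> simp [map_insert]

theorem selGreedy_succ (k : ℕ) (T : Finset (Fin (n + 1))) :
    selGreedy k T =
      if Fin.last n ∈ T ∧ #(selGreedy k (downSet T)) < k then
        insert (Fin.last n) ((selGreedy k (downSet T)).map Fin.castSuccEmb)
      else (selGreedy k (downSet T)).map Fin.castSuccEmb := by
  rw [selGreedy, List.finRange_succ_last, List.foldl_append, ← map_empty Fin.castSuccEmb,
    foldl_map_castSucc, List.foldl_cons, List.foldl_nil, card_map]
  rfl

theorem card_selGreedy (k : ℕ) (T : Finset (Fin n)) : #(selGreedy k T) = min #T k := by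
  induction n with
  | zero => simp [selGreedy, eq_empty_of_isEmpty T]
  | succ n ih =>
    have hlast : Fin.last n ∉ (selGreedy k (downSet T)).map Fin.castSuccEmb := by
      simp [Fin.castSucc_ne_last]
    rw [selGreedy_succ, ih, card_downSet]
    by_cases hT : Fin.last n ∈ T
    · have := card_erase_add_one hT
      by_cases hlt : min #(T.erase (Fin.last n)) k < k
      · rw [if_pos ⟨hT, hlt⟩, card_insert_of_notMem hlast, card_map, ih, card_downSet]
        omega
      · rw [if_neg (hlt ·.2), card_map, ih, card_downSet]
        omega
    · simp [hT, ih, card_downSet]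

theorem mem_selGreedy_last (k : ℕ) (T : Finset (Fin (n + 1))) :
    Fin.last n ∈ selGreedy k T ↔ Fin.last n ∈ T ∧ #(downSet T) < k := by
  have hmin : min #(downSet T) k < k ↔ #(downSet T) < k := by omega
  simp only [selGreedy_succ, card_selGreedy, hmin]
  split_ifs with h
  · simp only [mem_insert_self, true_iff]
    omega
  · simp only [mem_map, Fin.coe_castSuccEmb, Fin.castSucc_ne_last, and_false, exists_false,
      h]

end Greedy

section Permutations

variable {α : Type*} [Fintype α] [DecidableEq α]

theorem card_filter_perm_symm (p : Equiv.Perm α → Prop) [DecidablePred p] :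
    #{σ : Equiv.Perm α | p σ.symm} = #{σ : Equiv.Perm α | p σ} :=
  card_nbij' Equiv.symm Equiv.symm (fun σ hσ => by simpa using hσ) (fun σ hσ => by simpa using hσ)
    (fun σ _ => σ.symm_symm) (fun σ _ => σ.symm_symm)

theorem card_filter_perm_apply_eq_apply_eq (a b : α) {u v u' v' : α} (huv : u ≠ v)
    (huv' : u' ≠ v') :
    #{τ : Equiv.Perm α | τ a = u ∧ τ b = v} = #{τ : Equiv.Perm α | τ a = u' ∧ τ b = v'} := by
  obtain ⟨g, hgu, hgv⟩ :=
    MulAction.is_two_pretransitive_iff.mp (Equiv.Perm.isMultiplyPretransitive α 2) huv huv'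
  rw [Equiv.Perm.smul_def] at hgu hgv
  refine card_nbij' (g * ·) (g⁻¹ * ·) (fun τ hτ => ?_) (fun τ hτ => ?_)
    (fun τ _ => inv_mul_cancel_left g τ) (fun τ _ => mul_inv_cancel_left g τ)
  all_goals
    simp only [coe_filter, mem_univ, true_and, Set.mem_ofPred_eq, Equiv.Perm.mul_apply] at hτ ⊢
    simp [hτ, ← hgu, ← hgv]

theorem card_filter_perm_pair_mem_mul {a b : α} (hab : a ≠ b) {S : Finset (α × α)}
    (hS : S ⊆ univ.offDiag) :
    #{τ : Equiv.Perm α | (τ a, τ b) ∈ S} * (Fintype.card α * (Fintype.card α - 1)) =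
      #S * (Fintype.card α).factorial := by
  have hfiber : ∀ S ⊆ (univ : Finset α).offDiag,
      #{τ : Equiv.Perm α | (τ a, τ b) ∈ S} = #S * #{τ : Equiv.Perm α | τ a = a ∧ τ b = b} := by
    intro S hS
    rw [card_eq_sum_card_fiberwise (f := fun τ : Equiv.Perm α => (τ a, τ b)) (t := S)
      (fun τ hτ => by simpa using hτ), ← smul_eq_mul, ← sum_const]
    refine sum_congr rfl fun uv huv => ?_
    have huv' : uv.1 ≠ uv.2 := (mem_offDiag.mp (hS huv)).2.2
    rw [← card_filter_perm_apply_eq_apply_eq a b huv' hab, filter_filter]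
    congr 1
    ext τ
    simp only [mem_filter, mem_univ, true_and]
    constructor
    · rintro ⟨-, rfl⟩
      exact ⟨rfl, rfl⟩
    · rintro ⟨h₁, h₂⟩
      rw [Prod.ext_iff]
      simp_all
  have htotal := hfiber univ.offDiag subset_rfl
  rw [filter_true_of_mem fun τ _ => by simpa using τ.injective.ne hab, card_univ,
    Fintype.card_perm, offDiag_card, card_univ] at htotal
  rw [hfiber S hS, htotal, Nat.mul_sub_one]
  ac_rfl

end Permutations

theorem prefixSet_eq_map {m : ℕ} (σ : Equiv.Perm (Fin m)) (e : Fin m) :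
    prefixSet σ e = (Iio (σ.symm e)).map σ.toEmbedding := by
  ext x
  simp [prefixSet]

theorem card_prefixSet {m : ℕ} (σ : Equiv.Perm (Fin m)) (e : Fin m) :
    #(prefixSet σ e) = σ.symm e := by
  rw [prefixSet_eq_map, card_map, Fin.card_Iio]

theorem card_filter_lt_snd_le_mul_two {N k : ℕ} (hk : k < N) :
    #{p : Fin N × Fin N | p.1 < p.2 ∧ p.2.val ≤ k} * 2 = k * (k + 1) := by
  have hfiber (v : Fin N) :
      #{u : Fin N | u < v ∧ v.val ≤ k} = if v.val ≤ k then v.val else 0 := by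
    split_ifs with hv
    · simp only [hv, and_true, filter_gt_eq_Iio, Fin.card_Iio]
    · simp [hv]
  have hrange : (range N).filter (· ≤ k) = range (k + 1) := by
    ext i
    simp only [mem_filter, mem_range]
    omega
  rw [card_filter, Fintype.sum_prod_type, sum_comm]
  simp only [← card_filter, hfiber]
  rw [Fin.sum_univ_eq_sum_range (fun i => if i ≤ k then i else 0), ← sum_filter, hrange,
    sum_range_id_mul_two, Nat.add_sub_cancel, mul_comm]

theorem mem_selGreedy_downSet_prefixSet_iff {m k : ℕ} (σ : Equiv.Perm (Fin (m + 2))) :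
    Fin.last m ∈ selGreedy k (downSet (prefixSet σ (Fin.last (m + 1)))) ↔
      σ.symm (Fin.last m).castSucc < σ.symm (Fin.last (m + 1)) ∧
        (σ.symm (Fin.last (m + 1))).val ≤ k := by
  set P := prefixSet σ (Fin.last (m + 1))
  have hmem :
      Fin.last m ∈ downSet P ↔ σ.symm (Fin.last m).castSucc < σ.symm (Fin.last (m + 1)) := by
    simp [P, prefixSet]
  have hcard (h : Fin.last m ∈ downSet P) :
      #(downSet (downSet P)) + 1 = σ.symm (Fin.last (m + 1)) := by
    have hlast : Fin.last (m + 1) ∉ P := by simp [P, prefixSet]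
    rw [card_downSet, card_erase_add_one h, card_downSet, erase_eq_of_notMem hlast,
      card_prefixSet]
  rw [mem_selGreedy_last, hmem]
  refine and_congr_right fun hlt => ?_
  have := hcard (hmem.mpr hlt)
  omega

theorem last_element_selection_prob_general {n k : ℕ} (hn : 0 < n)
    (hk2 : k ≤ n - 1) :
    ((Finset.univ.filter fun σ' : Equiv.Perm (Fin (n + 1)) =>
        (⟨n - 1, Nat.sub_lt hn Nat.one_pos⟩ : Fin n) ∈
          selGreedy k (downSet (prefixSet σ' (Fin.last n)))).card : ℝ) /
        (Nat.factorial (n + 1) : ℝ) =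
      ((k : ℝ) * ((k : ℝ) + 1)) / (2 * (n : ℝ) * ((n : ℝ) + 1)) := by
  obtain ⟨m, rfl⟩ : ∃ m, n = m + 1 := ⟨n - 1, by omega⟩
  have hlast : (⟨m + 1 - 1, Nat.sub_lt hn Nat.one_pos⟩ : Fin (m + 1)) = Fin.last m :=
    Fin.ext (by simp)
  set a : Fin (m + 2) := (Fin.last m).castSucc
  set b : Fin (m + 2) := Fin.last (m + 1)
  set S : Finset (Fin (m + 2) × Fin (m + 2)) := {p | p.1 < p.2 ∧ p.2.val ≤ k}
  have hselected :
      #{σ : Equiv.Perm (Fin (m + 2)) | Fin.last m ∈ selGreedy k (downSet (prefixSet σ b))} =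
        #{τ : Equiv.Perm (Fin (m + 2)) | (τ a, τ b) ∈ S} := by
    rw [← card_filter_perm_symm fun τ => (τ a, τ b) ∈ S]
    simp [S, a, b, mem_selGreedy_downSet_prefixSet_iff]
  have hcount := card_filter_perm_pair_mem_mul (Fin.castSucc_ne_last (Fin.last m))
    (S := S) (fun p hp => by simp_all [S, ne_of_lt])
  have hpairs : #S * 2 = k * (k + 1) := card_filter_lt_snd_le_mul_two (by omega)
  rw [Fintype.card_fin, Nat.add_sub_cancel] at hcount
  rw [hlast, hselected, div_eq_div_iff (by positivity) (by positivity)]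
  have hcross : #{τ : Equiv.Perm (Fin (m + 2)) | (τ a, τ b) ∈ S} * (2 * (m + 1) * (m + 1 + 1)) =
      k * (k + 1) * (m + 1 + 1).factorial := by
    rw [← hpairs, mul_right_comm _ 2, ← mul_assoc, ← hcount]
    ring
  exact_mod_cast hcross

/-- In the `k`-uniform matroid with all elements always active, processed in the natural
order with `T` the prefix before `n+1` in a uniformly random permutation of `[n+1]`, the
last element `n` is selected with probability exactly `k(k+1)/(2n(n+1))`. -/
theorem last_element_selection_prob {n k : ℕ} (hn : 0 < n) (hk1 : 1 ≤ k)
    (hk2 : k ≤ n - 1) :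
    ((Finset.univ.filter fun σ' : Equiv.Perm (Fin (n + 1)) =>
        (⟨n - 1, Nat.sub_lt hn Nat.one_pos⟩ : Fin n) ∈
          selGreedy k (downSet (prefixSet σ' (Fin.last n)))).card : ℝ) /
        (Nat.factorial (n + 1) : ℝ) =
      ((k : ℝ) * ((k : ℝ) + 1)) / (2 * (n : ℝ) * ((n : ℝ) + 1)) :=
  last_element_selection_prob_general hn hk2
end
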